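/- arXiv:gr-qc/0701112 — 2 statements merged into one kernel-verified Lean document; each statement's English description precedes it below -/
import Mathlib

section
/- Let ξ, η : ℂ → ℂ be analytic near 0, and suppose ξ(−w) = conj(ξ(conj w)) and η(−w) = e^{2iδ}·conj(η(conj w)) for a real constant δ. Define e₊(w) = (1 − w·ξ(w))/(1 + w·ξ(w)) and f₊(w) = w·η(w)/(1 + w·ξ(w)) on the set where 1 + w·ξ(w) ≠ 0. Then for real z in a punctured symmetric neighborhood of 0 with both denominators nonzero, e₊(z)·conj(e₊(−z)) = 1 and f₊(z) = −e^{2iδ}·conj(f₊(−z))·e₊(z). -/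
open Complex

theorem stmt_5 (ξ η : ℂ → ℂ) (δ : ℝ) (r : ℝ) (hr : 0 < r)
    (hξa : AnalyticAt ℂ ξ 0) (hηa : AnalyticAt ℂ η 0)
    (hξ : ∀ w : ℂ, ‖w‖ < r → ξ (-w) = (starRingEnd ℂ) (ξ ((starRingEnd ℂ) w)))
    (hη : ∀ w : ℂ, ‖w‖ < r →
      η (-w) = Complex.exp (2 * Complex.I * δ) * (starRingEnd ℂ) (η ((starRingEnd ℂ) w)))
    (e f : ℂ → ℂ)
    (he : ∀ w : ℂ, 1 + w * ξ w ≠ 0 → e w = (1 - w * ξ w) / (1 + w * ξ w))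
    (hf : ∀ w : ℂ, 1 + w * ξ w ≠ 0 → f w = w * η w / (1 + w * ξ w)) :
    ∀ z : ℝ, z ≠ 0 → |z| < r →
      1 + (z : ℂ) * ξ z ≠ 0 → 1 + (-z : ℂ) * ξ (-z) ≠ 0 →
      e z * (starRingEnd ℂ) (e (-z)) = 1 ∧
      f z = -Complex.exp (2 * Complex.I * δ) * (starRingEnd ℂ) (f (-z)) * e z := by
  intro z hz hzr h1 h2
  have hzr' : ‖(z : ℂ)‖ < r := by simpa using hzr
  have hξz : ξ (-(z : ℂ)) = (starRingEnd ℂ) (ξ z) := by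
    simpa [Complex.conj_ofReal] using hξ z hzr'
  have hηz : η (-(z : ℂ)) =
      Complex.exp (2 * Complex.I * δ) * (starRingEnd ℂ) (η z) := by
    simpa [Complex.conj_ofReal] using hη z hzr'
  have h2' : (1 : ℂ) - (z : ℂ) * (starRingEnd ℂ) (ξ z) ≠ 0 := by
    intro h; apply h2
    rw [hξz]; rw [← h]; ring
  have h3 : (1 : ℂ) - (z : ℂ) * ξ z ≠ 0 := by
    intro h; apply h2'
    have := congrArg (starRingEnd ℂ) h
    simpa [map_sub, map_mul, Complex.conj_ofReal] using this
  have hez : e z = (1 - (z : ℂ) * ξ z) / (1 + (z : ℂ) * ξ z) := he z h1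
  have hfz : f z = (z : ℂ) * η z / (1 + (z : ℂ) * ξ z) := hf z h1
  have henz : e (-(z : ℂ)) =
      (1 + (z : ℂ) * (starRingEnd ℂ) (ξ z)) / (1 - (z : ℂ) * (starRingEnd ℂ) (ξ z)) := by
    rw [he (-(z : ℂ)) (by simpa using h2), hξz]; ring_nf
  have hfnz : f (-(z : ℂ)) =
      (-(z : ℂ)) * (Complex.exp (2 * Complex.I * δ) * (starRingEnd ℂ) (η z)) /
        (1 - (z : ℂ) * (starRingEnd ℂ) (ξ z)) := by
    rw [hf (-(z : ℂ)) (by simpa using h2), hξz, hηz]; ring_nf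
  have hexp : (starRingEnd ℂ) (Complex.exp (2 * Complex.I * δ)) =
      (Complex.exp (2 * Complex.I * δ))⁻¹ := by
    rw [← Complex.exp_conj, ← Complex.exp_neg]
    congr 1
    rw [map_mul, map_mul, Complex.conj_I, Complex.conj_ofReal, map_ofNat]
    ring
  have hE : Complex.exp (2 * Complex.I * δ) ≠ 0 := Complex.exp_ne_zero _
  constructor
  · rw [hez, henz, map_div₀, map_add, map_sub, map_mul, map_one, Complex.conj_ofReal,
      Complex.conj_conj]
    field_simp
  · rw [hfz, hfnz, hez, map_div₀]
    simp only [map_mul, map_neg, map_sub, map_one, Complex.conj_ofReal, Complex.conj_conj, hexp]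
    field_simp
end

section
/- Conversely to the previous statement, suppose ξ, η : ℂ → ℂ are analytic near 0, define e₊ and f₊ as before, and assume e₊(w)·e₊(−w) = 1 and f₊(w) = −ε·f₊(−w)·e₊(w) hold identically on a punctured neighborhood of 0 where the relevant denominators are nonzero. Then ξ(−w) = ξ(w) and η(−w) = ε·η(w) on that neighborhood. -/
/-! The Möbius map `a ↦ (1 - a) / (1 + a)` sends `-a` to the inverse of the image of `a`, and
this characterises `-a`. So `e₊(w) e₊(-w) = 1` forces `-w ξ(-w) = -w ξ(w)`, i.e. `ξ` is even
away from `0`; with `ξ` even, the identity for `f₊` cancels down to `η(w) = ε η(-w)`. At `w = 0`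
evenness of `ξ` is trivial, and `η(0) = ε η(0)` follows by continuity of `η`. -/

open Complex Filter Topology

theorem mobius_mul_mobius_eq_one_iff {K : Type*} [Field K] (h2 : (2 : K) ≠ 0) {a b : K}
    (ha : 1 + a ≠ 0) (hb : 1 + b ≠ 0) :
    (1 - a) / (1 + a) * ((1 - b) / (1 + b)) = 1 ↔ b = -a := by
  rw [div_mul_div_comm, div_eq_one_iff_eq (mul_ne_zero ha hb)]
  constructor
  · intro h
    have hsum : 2 * (a + b) = 0 := by linear_combination -h
    linear_combination ((mul_eq_zero.mp hsum).resolve_left h2)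
  · rintro rfl
    ring

theorem eq_mul_of_eq_mul_of_mul_self_eq_one {K : Type*} [CommMonoid K] {ε x y : K}
    (hε : ε * ε = 1) (h : x = ε * y) : y = ε * x := by
  rw [h, ← mul_assoc, hε, one_mul]

theorem even_odd_at_of_mobius_identities {K : Type*} [Field K] (h2 : (2 : K) ≠ 0)
    {ξ η e f : K → K} {ε w : K} (hε : ε * ε = 1) (hw : w ≠ 0)
    (hpos : 1 + w * ξ w ≠ 0) (hneg : 1 + -w * ξ (-w) ≠ 0)
    (he_pos : e w = (1 - w * ξ w) / (1 + w * ξ w))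
    (he_neg : e (-w) = (1 - -w * ξ (-w)) / (1 + -w * ξ (-w)))
    (hf_pos : f w = w * η w / (1 + w * ξ w))
    (hf_neg : f (-w) = -w * η (-w) / (1 + -w * ξ (-w)))
    (hE : e w * e (-w) = 1) (hF : f w = -ε * f (-w) * e w) :
    ξ (-w) = ξ w ∧ η (-w) = ε * η w := by
  rw [he_pos, he_neg, mobius_mul_mobius_eq_one_iff h2 hpos hneg] at hE
  have hξ : ξ (-w) = ξ w := mul_left_cancel₀ (neg_ne_zero.mpr hw) (by linear_combination hE)
  refine ⟨hξ, eq_mul_of_eq_mul_of_mul_self_eq_one hε ?_⟩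
  have hflip : 1 + -w * ξ w = 1 - w * ξ w := by ring
  have hneg' : 1 - w * ξ w ≠ 0 := by rwa [hξ, hflip] at hneg
  rw [hf_pos, hf_neg, he_pos, hξ, hflip] at hF
  field_simp at hF
  linear_combination hF

theorem eq_of_eventuallyEq_nhdsNE {X Y : Type*} [TopologicalSpace X] [TopologicalSpace Y]
    [T2Space Y] {f g : X → Y} {x : X} [(𝓝[≠] x).NeBot] (hf : ContinuousAt f x)
    (hg : ContinuousAt g x) (h : f =ᶠ[𝓝[≠] x] g) : f x = g x :=
  ((hf.eventuallyEq_nhds_iff_eventuallyEq_nhdsNE hg).mp h).eq_of_nhds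

theorem stmt_7_general (ξ η : ℂ → ℂ) (ε : ℂ) (hε : ε = 1 ∨ ε = -1) (r : ℝ)
    (hηa : AnalyticAt ℂ η 0)
    (hden : ∀ w : ℂ, ‖w‖ < r → 1 + w * ξ w ≠ 0)
    (e f : ℂ → ℂ)
    (he : ∀ w : ℂ, 1 + w * ξ w ≠ 0 → e w = (1 - w * ξ w) / (1 + w * ξ w))
    (hf : ∀ w : ℂ, 1 + w * ξ w ≠ 0 → f w = w * η w / (1 + w * ξ w))
    (hsym : ∀ w : ℂ, ‖w‖ < r → w ≠ 0 →
      e w * e (-w) = 1 ∧ f w = -ε * f (-w) * e w) :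
    ∀ w : ℂ, ‖w‖ < r → ξ (-w) = ξ w ∧ η (-w) = ε * η w := by
  have hε2 : ε * ε = 1 := by rcases hε with rfl | rfl <;> norm_num
  have punctured : ∀ w : ℂ, ‖w‖ < r → w ≠ 0 → ξ (-w) = ξ w ∧ η (-w) = ε * η w := by
    intro w hw hw0
    have hw' : ‖-w‖ < r := by rwa [norm_neg]
    obtain ⟨hE, hF⟩ := hsym w hw hw0
    exact even_odd_at_of_mobius_identities two_ne_zero hε2 hw0 (hden w hw) (hden (-w) hw')
      (he w (hden w hw)) (he (-w) (hden (-w) hw')) (hf w (hden w hw)) (hf (-w) (hden (-w) hw'))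
      hE hF
  intro w hw
  rcases eq_or_ne w 0 with rfl | hw0
  · refine ⟨by rw [neg_zero], ?_⟩
    have hr : 0 < r := by rwa [norm_zero] at hw
    have hball : ∀ᶠ z in 𝓝[≠] (0 : ℂ), ‖z‖ < r ∧ z ≠ 0 :=
      (eventually_nhdsWithin_of_eventually_nhds
        (eventually_of_mem (Metric.ball_mem_nhds 0 hr) fun _ => mem_ball_zero_iff.mp)).and
        self_mem_nhdsWithin
    have hηneg : ContinuousAt (fun z => η (-z)) 0 :=
      ContinuousAt.comp (g := η) (by rw [neg_zero]; exact hηa.continuousAt)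
        continuous_neg.continuousAt
    exact eq_of_eventuallyEq_nhdsNE hηneg (continuousAt_const.mul hηa.continuousAt)
      (hball.mono fun z hz => (punctured z hz.1 hz.2).2)
  · exact punctured w hw hw0

theorem stmt_7 (ξ η : ℂ → ℂ) (ε : ℂ) (hε : ε = 1 ∨ ε = -1) (r : ℝ) (hr : 0 < r)
    (hξa : AnalyticAt ℂ ξ 0) (hηa : AnalyticAt ℂ η 0)
    (hden : ∀ w : ℂ, ‖w‖ < r → 1 + w * ξ w ≠ 0)
    (e f : ℂ → ℂ)
    (he : ∀ w : ℂ, 1 + w * ξ w ≠ 0 → e w = (1 - w * ξ w) / (1 + w * ξ w))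
    (hf : ∀ w : ℂ, 1 + w * ξ w ≠ 0 → f w = w * η w / (1 + w * ξ w))
    (hsym : ∀ w : ℂ, ‖w‖ < r → w ≠ 0 →
      e w * e (-w) = 1 ∧ f w = -ε * f (-w) * e w) :
    ∀ w : ℂ, ‖w‖ < r → ξ (-w) = ξ w ∧ η (-w) = ε * η w :=
  stmt_7_general ξ η ε hε r hηa hden e f he hf hsym
end
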